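/- Let α ∈ ℝ, p ∈ ℂ, r > 0, and let u be analytic on the punctured disc {z ∈ ℂ : 0 < |z − p| < r} and satisfy u''(z) = 2u(z)³ + z·u(z) − α there, with a simple pole at p of residue −1, i.e. (z − p)·u(z) → −1 as z → p. Then the function f(z) := 2u(z)² − 2u'(z) + z extends to a function F analytic at p with a simple zero there: F(p) = 0 and F'(p) = −(2α + 1); equivalently, f(z) = −(2α+1)(z − p) + O((z − p)²) as z → p. -/

import Mathlib

/-!
Write `u = h / (z - p)` with `h` analytic and `h p = -1`. Expanding `2u² - 2u' + z` shows that
`(z - p) f` is analytic at `p`, so `f` has at most a simple pole. Painlevé II turns into the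
Riccati equation `f' = -2 u f + (2α + 1)`; comparing the most singular terms on both sides
forces first the residue of `f`, then `f(p)`, to vanish, and then gives `f'(p) = -(2α + 1)`.
-/

open Filter Topology Set Metric

/-- The auxiliary function `f(z) = 2 u(z)^2 - 2 u'(z) + z` appearing in the
Bäcklund transformation for Painlevé II, in the complex setting. -/
noncomputable def piiFC (u : ℂ → ℂ) : ℂ → ℂ :=
  fun z => 2 * (u z) ^ 2 - 2 * deriv u z + z

theorem AnalyticAt.dslope {𝕜 E : Type*} [NontriviallyNormedField 𝕜] [NormedAddCommGroup E]
    [NormedSpace 𝕜 E] {f : 𝕜 → E} {a : 𝕜} (hf : AnalyticAt 𝕜 f a) :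
    AnalyticAt 𝕜 (dslope f a) a :=
  let ⟨_, hP⟩ := hf
  ⟨_, hP.has_fpower_series_dslope_fslope⟩

theorem analyticAt_update_of_tendsto {E : Type*} [NormedAddCommGroup E] [NormedSpace ℂ E]
    [CompleteSpace E] {g : ℂ → E} {p : ℂ} {a : E}
    (hg : ∀ᶠ z in 𝓝[≠] p, DifferentiableAt ℂ g z) (hlim : Tendsto g (𝓝[≠] p) (𝓝 a)) :
    AnalyticAt ℂ (Function.update g p a) p := by
  refine Complex.analyticAt_of_differentiable_on_punctured_nhds_of_continuousAt ?_
    (continuousAt_update_same.2 hlim)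
  filter_upwards [hg, eventually_nhdsNE_eventually_nhds_iff.2
    (Function.update_eventuallyEq_nhdsNE g p p a)] with z hgz hupd
  exact hgz.congr_of_eventuallyEq hupd

section SimplePole

variable {𝕜 : Type*} [NontriviallyNormedField 𝕜]

theorem tendsto_sub_nhdsNE_zero (p : 𝕜) : Tendsto (fun z => z - p) (𝓝[≠] p) (𝓝 0) := by
  have := ((continuous_sub_right p).tendsto p).mono_left (nhdsWithin_le_nhds (s := {p}ᶜ))
  rwa [sub_self] at this

theorem eq_zero_of_sub_mul_deriv_eq {φ A B : 𝕜 → 𝕜} {p a b : 𝕜} (hφ : ContinuousAt φ p)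
    (hφ' : ContinuousAt (deriv φ) p) (hA : Tendsto A (𝓝[≠] p) (𝓝 a)) (ha : a ≠ 0)
    (hB : Tendsto B (𝓝[≠] p) (𝓝 b))
    (h : ∀ᶠ z in 𝓝[≠] p, (z - p) * deriv φ z = A z * φ z + (z - p) * B z) : φ p = 0 := by
  have hlhs := (tendsto_sub_nhdsNE_zero p).mul (hφ'.tendsto.mono_left nhdsWithin_le_nhds)
  have hrhs := (hA.mul (hφ.tendsto.mono_left nhdsWithin_le_nhds)).add
    ((tendsto_sub_nhdsNE_zero p).mul hB)
  have hlim := tendsto_nhds_unique hlhs (hrhs.congr' (EventuallyEq.symm h))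
  simp only [zero_mul, add_zero] at hlim
  exact (mul_eq_zero.1 hlim.symm).resolve_left ha

theorem deriv_eq_of_riccati {F u : 𝕜 → 𝕜} {p c : 𝕜} (hF : DifferentiableAt 𝕜 F p)
    (hF' : ContinuousAt (deriv F) p) (hFp : F p = 0)
    (hpole : Tendsto (fun z => (z - p) * u z) (𝓝[≠] p) (𝓝 (-1)))
    (hric : ∀ᶠ z in 𝓝[≠] p, deriv F z = -2 * u z * F z + c) : deriv F p = -c := by
  have hslope : Tendsto (dslope F p) (𝓝[≠] p) (𝓝 (deriv F p)) := by
    rw [← dslope_same]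
    exact (continuousAt_dslope_same.2 hF).tendsto.mono_left nhdsWithin_le_nhds
  have hric' : ∀ᶠ z in 𝓝[≠] p, -2 * ((z - p) * u z) * dslope F p z + c = deriv F z := by
    filter_upwards [hric] with z hz
    have hFz : (z - p) * dslope F p z = F z := by
      simpa [hFp] using sub_smul_dslope F p z
    rw [hz, ← hFz]
    ring
  have hlim := tendsto_nhds_unique (hF'.tendsto.mono_left nhdsWithin_le_nhds)
    (((tendsto_const_nhds.mul hpole).mul hslope).add tendsto_const_nhds |>.congr' hric')
  linear_combination -hlim

end SimplePole

theorem exists_analyticAt_simple_zero_of_riccati {u f w : ℂ → ℂ} {p c : ℂ}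
    (hpole : Tendsto (fun z => (z - p) * u z) (𝓝[≠] p) (𝓝 (-1)))
    (hw : AnalyticAt ℂ w p) (hwf : ∀ᶠ z in 𝓝[≠] p, w z = (z - p) * f z)
    (hric : ∀ᶠ z in 𝓝[≠] p, HasDerivAt f (-2 * u z * f z + c) z) :
    ∃ F : ℂ → ℂ, AnalyticAt ℂ F p ∧ (∀ᶠ z in 𝓝[≠] p, F z = f z) ∧
      F p = 0 ∧ deriv F p = -c := by
  have hwp : w p = 0 := by
    refine eq_zero_of_sub_mul_deriv_eq (A := fun z => 1 - 2 * ((z - p) * u z))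
      (B := fun z => c * (z - p)) hw.continuousAt hw.deriv.continuousAt
      (by simpa using tendsto_const_nhds.sub (hpole.const_mul 2)) (by norm_num)
      ((tendsto_sub_nhdsNE_zero p).const_mul c) ?_
    -- `(z - p) w' = w + (z - p)² f'`; insert the Riccati equation multiplied by `(z - p)²`.
    filter_upwards [hwf, eventually_nhdsNE_eventually_nhds_iff.2 hwf, hric] with z hwz hwz' hfz
    rw [((((hasDerivAt_id' z).sub_const p).fun_mul hfz).congr_of_eventuallyEq hwz').deriv, hwz]
    ring
  set F := dslope w p
  have hFf : ∀ᶠ z in 𝓝[≠] p, F z = f z := by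
    filter_upwards [hwf, self_mem_nhdsWithin] with z hwz hne
    refine mul_left_cancel₀ (sub_ne_zero.2 hne) ?_
    simpa [hwp, hwz] using sub_smul_dslope w p z
  have hFric : ∀ᶠ z in 𝓝[≠] p, deriv F z = -2 * u z * F z + c := by
    filter_upwards [eventually_nhdsNE_eventually_nhds_iff.2 hFf, hric] with z hFz hfz
    replace hFz : F =ᶠ[𝓝 z] f := hFz
    rw [hFz.deriv_eq, hfz.deriv, hFz.self_of_nhds]
  have hF : AnalyticAt ℂ F p := hw.dslope
  have hFp : F p = 0 := by
    refine eq_zero_of_sub_mul_deriv_eq (A := fun z => -2 * ((z - p) * u z)) (B := fun _ => c)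
      hF.continuousAt hF.deriv.continuousAt (hpole.const_mul (-2)) (by norm_num)
      tendsto_const_nhds ?_
    filter_upwards [hFric] with z hz
    rw [hz]
    ring
  exact ⟨F, hF, hFf, hFp,
    deriv_eq_of_riccati hF.differentiableAt hF.deriv.continuousAt hFp hpole hFric⟩

theorem hasDerivAt_piiFC {u : ℂ → ℂ} {z α : ℂ} (hu : AnalyticAt ℂ u z)
    (hPII : deriv (deriv u) z = 2 * u z ^ 3 + z * u z - α) :
    HasDerivAt (piiFC u) (-2 * u z * piiFC u z + (2 * α + 1)) z := by
  have hD := (((hu.differentiableAt.hasDerivAt.fun_pow 2).const_mul 2).fun_sub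
    (hu.deriv.differentiableAt.hasDerivAt.const_mul 2)).fun_add (hasDerivAt_id' z)
  refine hD.congr_deriv ?_
  rw [hPII, piiFC]
  ring

theorem exists_analyticAt_eq_sub_mul_piiFC {u : ℂ → ℂ} {p : ℂ}
    (hu : ∀ᶠ z in 𝓝[≠] p, DifferentiableAt ℂ u z)
    (hpole : Tendsto (fun z => (z - p) * u z) (𝓝[≠] p) (𝓝 (-1))) :
    ∃ w : ℂ → ℂ, AnalyticAt ℂ w p ∧ ∀ᶠ z in 𝓝[≠] p, w z = (z - p) * piiFC u z := by
  set h := Function.update (fun z => (z - p) * u z) p (-1)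
  have hh : AnalyticAt ℂ h p := analyticAt_update_of_tendsto
    (by filter_upwards [hu] with z hz using (differentiableAt_id.sub_const p).mul hz) hpole
  -- Near `z ≠ p`, `h = (z - p) u`, so `(z - p) u' = h' - u` and `u (h + 1) = h · dslope h p`.
  refine ⟨fun z => 2 * h z * dslope h p z - 2 * deriv h z + z * (z - p),
    ((analyticAt_const.mul hh).mul hh.dslope).sub (analyticAt_const.mul hh.deriv) |>.add
      (analyticAt_id.mul (analyticAt_id.sub analyticAt_const)), ?_⟩
  filter_upwards [hu, eventually_nhdsNE_eventually_nhds_iff.2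
    (Function.update_eventuallyEq_nhdsNE (fun z => (z - p) * u z) p p (-1))] with z huz hhz
  replace hhz : h =ᶠ[𝓝 z] fun z => (z - p) * u z := hhz
  have hslope : (z - p) * dslope h p z = h z + 1 := by
    simpa [h] using sub_smul_dslope h p z
  rw [hhz.deriv_eq, (((hasDerivAt_id' z).sub_const p).fun_mul huz.hasDerivAt).deriv]
  rw [hhz.self_of_nhds] at hslope ⊢
  simp only [piiFC]
  linear_combination (2 * u z) * hslope

/-- if `u` solves Painlevé II on a punctured disc around `p`
with a simple pole of residue `-1` at `p`, then `f = 2 u^2 - 2 u' + z`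
extends to a function `F` analytic at `p` with a simple zero there:
`F(p) = 0` and `F'(p) = -(2α+1)`. -/
theorem piiFC_simple_zero (α : ℝ) (p : ℂ) (r : ℝ) (hr : 0 < r)
    (u : ℂ → ℂ) (hu : AnalyticOnNhd ℂ u (ball p r \ {p}))
    (hPII : ∀ z ∈ ball p r \ {p},
      deriv (deriv u) z = 2 * (u z) ^ 3 + z * u z - (α : ℂ))
    (hpole : Tendsto (fun z => (z - p) * u z) (𝓝[≠] p) (𝓝 (-1))) :
    ∃ F : ℂ → ℂ, AnalyticAt ℂ F p ∧
      (∀ᶠ z in 𝓝[≠] p, F z = piiFC u z) ∧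
      F p = 0 ∧ deriv F p = -(2 * (α : ℂ) + 1) := by
  have hU : ∀ᶠ z in 𝓝[≠] p, z ∈ ball p r \ {p} :=
    sdiff_mem_nhdsWithin_compl (ball_mem_nhds p hr) _
  obtain ⟨w, hw, hwf⟩ := exists_analyticAt_eq_sub_mul_piiFC
    (by filter_upwards [hU] with z hz using (hu z hz).differentiableAt) hpole
  exact exists_analyticAt_simple_zero_of_riccati hpole hw hwf
    (by filter_upwards [hU] with z hz using hasDerivAt_piiFC (hu z hz) (hPII z hz))
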